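/- Use the heat-kernel covariance decomposition C_t := C_∞ − C_∞ e^{−tC_∞⁻¹}. Then C_t' = e^{−tC_∞⁻¹}, C_t'' = −C_∞⁻¹ C_t' is negative semidefinite, and if the renormalized potentials satisfy ∇²V_t(x) ≥ 0 for all t ≥ 0 and x ∈ ℝ^d, then the multiscale Bakry–Émery criterion holds with the constant λ_t' = ½ λ_min(C_∞⁻¹): for all t ≥ 0 and all x, C_t' ∇²V_t(x) C_t' ≥ ½C_t'' + ½ λ_min(C_∞⁻¹) C_t' as quadratic forms, where λ_min(C_∞⁻¹) denotes the smallest eigenvalue of C_∞⁻¹. -/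

import Mathlib

open MeasureTheory Real Matrix Filter

noncomputable section

variable {ι : Type*} [Fintype ι] [DecidableEq ι]

/-- Density of the centered Gaussian measure with (positive definite) covariance `C`. -/
def gaussDensity (C : Matrix ι ι ℝ) (x : ι → ℝ) : ℝ :=
  (2 * π) ^ (-(Fintype.card ι : ℝ) / 2) * C.det ^ (-(1 : ℝ) / 2) *
    Real.exp (-(1 / 2) * (x ⬝ᵥ C⁻¹.mulVec x))

/-- Convolution of the Gaussian `γ_C` with a function `f`. -/
def gconv (C : Matrix ι ι ℝ) (f : (ι → ℝ) → ℝ) (x : ι → ℝ) : ℝ :=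
  ∫ y, gaussDensity C y * f (x - y)

/-- Gradient as the vector of partial derivatives. -/
def grad (f : (ι → ℝ) → ℝ) (x : ι → ℝ) : ι → ℝ :=
  fun i => fderiv ℝ f x (Pi.single i 1)

/-- Hessian matrix. -/
def hess (f : (ι → ℝ) → ℝ) (x : ι → ℝ) : Matrix ι ι ℝ :=
  Matrix.of fun i j => fderiv ℝ (fun y => fderiv ℝ f y (Pi.single j 1)) x (Pi.single i 1)

/-- The quadratic form `|u|²_D = ⟨u, D u⟩`. -/
def quadD (D : Matrix ι ι ℝ) (u : ι → ℝ) : ℝ := u ⬝ᵥ D.mulVec u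

/-- The `D`-Laplacian `Δ_D f = ∑_{i,j} D_{ij} ∂²_{ij} f`. -/
def lapD (D : Matrix ι ι ℝ) (f : (ι → ℝ) → ℝ) (x : ι → ℝ) : ℝ :=
  ∑ i, ∑ j, D i j * hess f x i j

/-- Variance of `f` under `μ`. -/
def varμ (μ : Measure (ι → ℝ)) (f : (ι → ℝ) → ℝ) : ℝ :=
  ∫ x, (f x - ∫ y, f y ∂μ) ^ 2 ∂μ

/-- The Poincaré constant of `μ` in the metric given by the psd matrix `D`:
the smallest `K` such that `Var_μ(φ) ≤ K ∫ |∇φ|²_D dμ` for smooth compactly supported `φ`. -/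
def PoincareConst (μ : Measure (ι → ℝ)) (D : Matrix ι ι ℝ) : ℝ :=
  sInf {K : ℝ | 0 ≤ K ∧ ∀ φ : (ι → ℝ) → ℝ, ContDiff ℝ (⊤ : ℕ∞) φ → HasCompactSupport φ →
    varμ μ φ ≤ K * ∫ x, quadD D (grad φ x) ∂μ}

/-- Largest eigenvalue of a symmetric matrix, via the Rayleigh quotient. -/
def maxEigen (M : Matrix ι ι ℝ) : ℝ :=
  sSup {r : ℝ | ∃ u : ι → ℝ, u ⬝ᵥ u = 1 ∧ u ⬝ᵥ M.mulVec u = r}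

/-- Smallest eigenvalue of a symmetric matrix, via the Rayleigh quotient. -/
def minEigen (M : Matrix ι ι ℝ) : ℝ :=
  sInf {r : ℝ | ∃ u : ι → ℝ, u ⬝ᵥ u = 1 ∧ u ⬝ᵥ M.mulVec u = r}

/-- The renormalized potential `V_t = -log (γ_{C_t} ∗ e^{-V_0})` (with `V_0` at `t = 0`,
since `γ_0 = δ_0`). -/
def renormPotential (C : ℝ → Matrix ι ι ℝ) (V0 : (ι → ℝ) → ℝ) (t : ℝ) (x : ι → ℝ) : ℝ :=
  if t = 0 then V0 x else - Real.log (gconv (C t) (fun y => Real.exp (-V0 y)) x)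

/-- The Polchinski semigroup `P_{s,t} f = e^{V_t} (γ_{C_t - C_s} ∗ (f e^{-V_s}))`
(for `s = t`, `γ_0 = δ_0` and `P_{t,t} f = f`). -/
def Pst (C : ℝ → Matrix ι ι ℝ) (V : ℝ → (ι → ℝ) → ℝ) (s t : ℝ)
    (f : (ι → ℝ) → ℝ) (x : ι → ℝ) : ℝ :=
  if s < t then Real.exp (V t x) * gconv (C t - C s) (fun y => f y * Real.exp (-V s y)) x
  else f x

/-- The Polchinski flow `ν_t = e^{V_∞(0) - V_t} γ_{C_∞ - C_t}`. -/
def nuFlow (Cinf : Matrix ι ι ℝ) (C : ℝ → Matrix ι ι ℝ)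
    (V : ℝ → (ι → ℝ) → ℝ) (Vinf0 : ℝ) (t : ℝ) : Measure (ι → ℝ) :=
  volume.withDensity fun x =>
    ENNReal.ofReal (Real.exp (Vinf0 - V t x) * gaussDensity (Cinf - C t) x)

/-- The generator `L_t f = ½ Δ_{C_t'} f - ⟨∇V_t, ∇f⟩_{C_t'}`. -/
def Lop (C' : ℝ → Matrix ι ι ℝ) (V : ℝ → (ι → ℝ) → ℝ) (t : ℝ)
    (f : (ι → ℝ) → ℝ) (x : ι → ℝ) : ℝ :=
  (1 / 2) * lapD (C' t) f x - (grad (V t) x) ⬝ᵥ (C' t).mulVec (grad f x)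


/-- Entrywise derivative of the one-parameter matrix exponential. -/
theorem hasDerivAt_matrix_exp_entry (A : Matrix ι ι ℝ) (t : ℝ) (i j : ι) :
    HasDerivAt (fun u : ℝ => NormedSpace.exp (u • A) i j)
      ((A * NormedSpace.exp (t • A)) i j) t := by
  letI : SeminormedRing (Matrix ι ι ℝ) := Matrix.linftyOpSemiNormedRing
  letI : NormedRing (Matrix ι ι ℝ) := Matrix.linftyOpNormedRing
  letI : NormedAlgebra ℝ (Matrix ι ι ℝ) := Matrix.linftyOpNormedAlgebra
  have h := hasDerivAt_exp_smul_const' (𝕂 := ℝ) A t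
  let L : Matrix ι ι ℝ →ₗ[ℝ] ℝ :=
    { toFun := fun M => M i j
      map_add' := fun _ _ => rfl
      map_smul' := fun _ _ => rfl }
  have hL : Continuous L := L.continuous_of_finiteDimensional
  exact (ContinuousLinearMap.hasFDerivAt ⟨L, hL⟩).comp_hasDerivAt t h

/-- A nonnegative scalar multiple of a positive semidefinite real matrix is psd. -/
theorem PosSemidef.real_smul {M : Matrix ι ι ℝ} (hM : M.PosSemidef) {c : ℝ} (hc : 0 ≤ c) :
    (c • M).PosSemidef := by
  refine Matrix.PosSemidef.of_dotProduct_mulVec_nonneg ?_ fun x => ?_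
  · show (c • M)ᴴ = c • M
    rw [Matrix.conjTranspose_smul, hM.1.eq, star_trivial]
  · rw [Matrix.smul_mulVec, dotProduct_smul, smul_eq_mul]
    exact mul_nonneg hc (hM.dotProduct_mulVec_nonneg x)

/-- `M - λ_min(M) • 1` is positive semidefinite for a positive definite real matrix `M`. -/
theorem sub_minEigen_smul_one_posSemidef {M : Matrix ι ι ℝ} (hM : M.PosDef) :
    (M - minEigen M • 1).PosSemidef := by
  have hstar : ∀ x : ι → ℝ, star x = x := fun x => funext fun i => rfl
  have hbdd : BddBelow {r : ℝ | ∃ u : ι → ℝ, u ⬝ᵥ u = 1 ∧ u ⬝ᵥ M.mulVec u = r} := by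
    refine ⟨0, fun r hr => ?_⟩
    obtain ⟨u, -, hu2⟩ := hr
    have := hM.posSemidef.dotProduct_mulVec_nonneg u
    rwa [hstar, hu2] at this
  refine Matrix.PosSemidef.of_dotProduct_mulVec_nonneg ?_ ?_
  · show (M - minEigen M • 1)ᴴ = M - minEigen M • 1
    rw [Matrix.conjTranspose_sub, hM.1.eq, Matrix.conjTranspose_smul, star_trivial,
      Matrix.conjTranspose_one]
  · intro x
    rw [hstar, Matrix.sub_mulVec, dotProduct_sub, Matrix.smul_mulVec,
      Matrix.one_mulVec, dotProduct_smul, smul_eq_mul, sub_nonneg]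
    rcases eq_or_ne x 0 with rfl | hx
    · simp
    · have hxx0 : (0 : ℝ) ≤ x ⬝ᵥ x := Finset.sum_nonneg fun i _ => mul_self_nonneg (x i)
      have hxx : (0 : ℝ) < x ⬝ᵥ x :=
        hxx0.lt_of_ne (Ne.symm (fun h => hx (dotProduct_self_eq_zero.mp h)))
      set c : ℝ := Real.sqrt (x ⬝ᵥ x) with hcdef
      have hc : 0 < c := Real.sqrt_pos.mpr hxx
      have hc2 : c * c = x ⬝ᵥ x := Real.mul_self_sqrt hxx0
      have humem : (c⁻¹ • x) ⬝ᵥ (c⁻¹ • x) = 1 := by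
        rw [smul_dotProduct, dotProduct_smul, smul_eq_mul, smul_eq_mul, ← mul_assoc, ← hc2]
        field_simp
      have hle : minEigen M ≤ (c⁻¹ • x) ⬝ᵥ M.mulVec (c⁻¹ • x) :=
        csInf_le hbdd ⟨c⁻¹ • x, humem, rfl⟩
      have hval : (c⁻¹ • x) ⬝ᵥ M.mulVec (c⁻¹ • x) = (x ⬝ᵥ M.mulVec x) / (x ⬝ᵥ x) := by
        rw [Matrix.mulVec_smul, smul_dotProduct, dotProduct_smul, smul_eq_mul, smul_eq_mul,
          ← mul_assoc, ← hc2]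
        field_simp
      rw [hval] at hle
      have := mul_le_mul_of_nonneg_right hle hxx0
      calc minEigen M * (x ⬝ᵥ x) ≤ (x ⬝ᵥ M.mulVec x) / (x ⬝ᵥ x) * (x ⬝ᵥ x) := this
        _ = x ⬝ᵥ M.mulVec x := by field_simp

/-- For the heat-kernel covariance decomposition
`C_t = C_∞ − C_∞ e^{−tC_∞⁻¹}`: one has `C_t' = e^{−tC_∞⁻¹}`, `C_t'' = −C_∞⁻¹ C_t'` is
negative semidefinite, and if the renormalized potentials satisfy `∇²V_t(x) ≥ 0` for all
`t ≥ 0, x`, then the multiscale Bakry–Émery criterion holds with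
`λ_t' = ½ λ_min(C_∞⁻¹)`. -/
theorem heat_kernel_decomposition_bakry_emery
    {ι : Type*} [Fintype ι] [DecidableEq ι]
    (Cinf : Matrix ι ι ℝ) (hCinfsymm : Cinf.IsSymm) (hCinfpd : Cinf.PosDef)
    (V0 : (ι → ℝ) → ℝ) (hV0smooth : ContDiff ℝ (⊤ : ℕ∞) V0)
    -- `ν_0 = exp(−½⟨x, C_∞⁻¹x⟩ − V_0(x)) dx` is a probability measure
    (hν0prob : IsProbabilityMeasure (volume.withDensity fun x : ι → ℝ =>
      ENNReal.ofReal (Real.exp (-(1 / 2) * (x ⬝ᵥ Cinf⁻¹.mulVec x) - V0 x))))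
    -- the heat-kernel covariance decomposition, its claimed derivative, and the
    -- renormalized potential
    (E : ℝ → Matrix ι ι ℝ) (hE : ∀ t, E t = NormedSpace.exp (-(t • Cinf⁻¹)))
    (C : ℝ → Matrix ι ι ℝ) (hC : ∀ t, C t = Cinf - Cinf * E t)
    (V : ℝ → (ι → ℝ) → ℝ) (hV : V = renormPotential C V0) :
    -- (i) `C_t' = e^{−tC_∞⁻¹}`
    (∀ t : ℝ, ∀ i j, HasDerivAt (fun u => C u i j) (E t i j) t) ∧
    -- (ii) `C_t'' = −C_∞⁻¹ C_t'`, which is negative semidefinite (i.e. `C_∞⁻¹ C_t'` is psd)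
    (∀ t : ℝ, ∀ i j, HasDerivAt (fun u => E u i j) ((-(Cinf⁻¹ * E t)) i j) t) ∧
    (∀ t : ℝ, 0 ≤ t → (Cinf⁻¹ * E t).PosSemidef) ∧
    -- (iii) if `∇²V_t ≥ 0` everywhere then the multiscale Bakry–Émery criterion holds
    -- with constant `λ_t' = ½ λ_min(C_∞⁻¹)`
    ((∀ t : ℝ, 0 ≤ t → ∀ x : ι → ℝ, (hess (V t) x).PosSemidef) →
      ∀ t : ℝ, 0 ≤ t → ∀ x : ι → ℝ,
        (E t * hess (V t) x * E t -
          ((1 / 2 : ℝ) • (-(Cinf⁻¹ * E t)) +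
            ((1 / 2) * minEigen Cinf⁻¹) • E t)).PosSemidef) := by
  have hA : (Cinf⁻¹).PosDef := hCinfpd.inv
  have hAsymm : (Cinf⁻¹)ᵀ = Cinf⁻¹ := by
    rw [Matrix.transpose_nonsing_inv, hCinfsymm]
  have hE' : ∀ u : ℝ, E u = NormedSpace.exp (u • (-Cinf⁻¹)) := fun u => by
    rw [hE, smul_neg]
  -- (ii) the derivative of E
  have hder : ∀ t : ℝ, ∀ i j, HasDerivAt (fun u => E u i j) ((-(Cinf⁻¹ * E t)) i j) t := by
    intro t i j
    have h := hasDerivAt_matrix_exp_entry (-Cinf⁻¹) t i j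
    have hfun : (fun u : ℝ => E u i j) = fun u : ℝ => NormedSpace.exp (u • (-Cinf⁻¹)) i j := by
      funext u; rw [hE' u]
    have hval : (-(Cinf⁻¹ * E t)) = -Cinf⁻¹ * NormedSpace.exp (t • (-Cinf⁻¹)) := by
      rw [← hE' t, neg_mul]
    rw [hfun, hval]
    exact h
  -- (i) the derivative of C
  have hderC : ∀ t : ℝ, ∀ i j, HasDerivAt (fun u => C u i j) (E t i j) t := by
    intro t i j
    have key : ∀ u : ℝ, C u i j = Cinf i j - ∑ k, Cinf i k * E u k j := fun u => by
      rw [hC]; simp [Matrix.sub_apply, Matrix.mul_apply]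
    have h : HasDerivAt (fun u : ℝ => Cinf i j - ∑ k, Cinf i k * E u k j)
        (0 - ∑ k, Cinf i k * ((-(Cinf⁻¹ * E t)) k j)) t :=
      (hasDerivAt_const t _).sub (HasDerivAt.fun_sum fun k _ => (hder t k j).const_mul _)
    have hv : 0 - ∑ k, Cinf i k * ((-(Cinf⁻¹ * E t)) k j) = E t i j := by
      have h1 : Cinf * (Cinf⁻¹ * E t) = E t := by
        rw [← Matrix.mul_assoc, Matrix.mul_nonsing_inv _ hCinfpd.det_pos.ne'.isUnit,
          Matrix.one_mul]
      have h2 : ∑ k, Cinf i k * ((-(Cinf⁻¹ * E t)) k j) = -((Cinf * (Cinf⁻¹ * E t)) i j) := by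
        simp [Matrix.mul_apply, Matrix.neg_apply, mul_neg]
      rw [h2, h1, zero_sub, neg_neg]
    have hfun : (fun u : ℝ => C u i j) = fun u : ℝ => Cinf i j - ∑ k, Cinf i k * E u k j :=
      funext key
    rw [hfun, ← hv]
    exact h
  -- symmetry and algebraic identities for E
  have hET : ∀ s : ℝ, (E s)ᵀ = E s := fun s => by
    rw [hE, ← Matrix.exp_transpose, Matrix.transpose_neg, Matrix.transpose_smul, hAsymm]
  have hEH : ∀ s : ℝ, (E s)ᴴ = E s := fun s => by
    rw [Matrix.conjTranspose_eq_transpose_of_trivial, hET]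
  have hhalf : ∀ s : ℝ, E s = E (s / 2) * E (s / 2) := fun s => by
    rw [hE, hE, ← Matrix.exp_add_of_commute _ _ (Commute.refl _)]
    congr 1
    rw [← neg_add, ← add_smul]
    norm_num
  have hcomm : ∀ s : ℝ, Cinf⁻¹ * E s = E s * Cinf⁻¹ := fun s => by
    rw [hE]
    exact (((Commute.refl Cinf⁻¹).smul_right s).neg_right.exp_right)
  have hmulpsd : ∀ M : Matrix ι ι ℝ, M.PosSemidef → (∀ u : ℝ, M * E u = E u * M) →
      ∀ s : ℝ, (M * E s).PosSemidef := by
    intro M hM hcm s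
    have e1 : M * E s = (E (s / 2))ᴴ * M * E (s / 2) := by
      rw [hEH, hhalf s, ← Matrix.mul_assoc, hcm]
    rw [e1]
    exact hM.conjTranspose_mul_mul_same _
  refine ⟨hderC, hder, fun t _ => hmulpsd _ hA.posSemidef hcomm t, ?_⟩
  -- (iii) the Bakry–Émery criterion
  intro hhess t ht x
  set H := hess (V t) x with hHdef
  have hHpsd : H.PosSemidef := hhess t ht x
  set lam := minEigen Cinf⁻¹ with hlam
  have hM2 : (Cinf⁻¹ - lam • 1).PosSemidef := sub_minEigen_smul_one_posSemidef hA
  have hcm2 : ∀ u : ℝ, (Cinf⁻¹ - lam • 1) * E u = E u * (Cinf⁻¹ - lam • 1) := fun u => by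
    rw [Matrix.sub_mul, Matrix.mul_sub, hcomm u, Matrix.smul_mul, Matrix.mul_smul,
      Matrix.one_mul, Matrix.mul_one]
  have hpsd2 : ((1 / 2 : ℝ) • ((Cinf⁻¹ - lam • 1) * E t)).PosSemidef :=
    PosSemidef.real_smul (hmulpsd _ hM2 hcm2 t) (by norm_num)
  have hpsd1 : (E t * H * E t).PosSemidef := by
    have := hHpsd.conjTranspose_mul_mul_same (E t)
    rwa [hEH] at this
  have heq : E t * H * E t -
      ((1 / 2 : ℝ) • (-(Cinf⁻¹ * E t)) + ((1 / 2) * lam) • E t) =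
      E t * H * E t + (1 / 2 : ℝ) • ((Cinf⁻¹ - lam • 1) * E t) := by
    rw [Matrix.sub_mul, Matrix.smul_mul, Matrix.one_mul]
    rw [smul_sub, smul_neg, smul_smul]
    abel
  rw [heq]
  exact hpsd1.add hpsd2
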